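/- Let E be a Banach space, γ ∈ (0,1/2), and let k be a Volterra kernel of order −γ satisfying hypothesis (H). Let x : [0,T] → E be continuously differentiable, and for m ≥ 1, 0 ≤ a < b ≤ σ ≤ T let z^{m,σ}_{ba} = ∫_{a<r_1<⋯<r_m<b} k(σ,r_m) ∏_{j=1}^{m−1} k(r_{j+1},r_j) · ẋ_{r_1} ⊗ ⋯ ⊗ ẋ_{r_m} dr (projective tensor power valued Bochner integral). Fix integers p > n ≥ 1 and 0 ≤ s < t ≤ τ ≤ T, and for s ≤ u < v ≤ t set D(u,v) = ∫_{u<r_{n+1}<⋯<r_p<v} k(τ,r_p) ∏_{j=n+1}^{p−1} k(r_{j+1},r_j) · [z^{n,r_{n+1}}_{us} − z^{n,u}_{us}] ⊗ ẋ_{r_{n+1}} ⊗ ⋯ ⊗ ẋ_{r_p} dr_{n+1}⋯dr_p. Then Σ_{[u,v]∈D} ‖D(u,v)‖ → 0 as the mesh |D| of the partition D of [s,t] tends to 0. -/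

import Mathlib

/-!
STATEMENT 5 (Lemma 3.7 of the paper): on small scales the convolution product
`z^{p-n,τ}_{vu} ∗ z^{n,·}_{us}` behaves like the tensor product
`z^{p-n,τ}_{vu} ⊗ z^{n,u}_{us}`: the sum over a partition `D` of `[s,t]` of the
norms of the correction terms `D(u,v)` tends to `0` as the mesh `|D| → 0`.
The `n`-fold (resp. `p`-fold) projective tensor powers are abstracted as Banach
spaces `G` (resp. `H`) together with cross-norm (multi)linear maps `ιn` and `B`.
The orders are `n = n' + 1 ≥ 1` and `p = n + m` with `m = m' + 1 ≥ 1`, so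
`p > n ≥ 1`.
-/

open MeasureTheory

/-- Hypothesis (H): Volterra kernel of order `-γ` with constant `ck`. -/
def HypH (T γ ck : ℝ) (k : ℝ → ℝ → ℝ) : Prop :=
  (∀ r τ : ℝ, 0 ≤ r → r < τ → τ ≤ T → |k τ r| ≤ ck * (τ - r) ^ (-γ)) ∧
  (∀ r q τ : ℝ, 0 ≤ r → r < q → q < τ → τ ≤ T → ∀ η ∈ Set.Icc (0 : ℝ) 1,
    |k τ r - k q r| ≤ ck * ((q - r) ^ (-γ - η) * (τ - q) ^ η)) ∧
  (∀ s r τ : ℝ, 0 ≤ s → s < r → r < τ → τ ≤ T → ∀ η ∈ Set.Icc (0 : ℝ) 1,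
    |k τ r - k τ s| ≤ ck * ((τ - r) ^ (-γ - η) * (r - s) ^ η)) ∧
  (∀ s r q τ : ℝ, 0 ≤ s → s < r → r < q → q < τ → τ ≤ T →
    ∀ η ∈ Set.Icc (0 : ℝ) 1, ∀ β ∈ Set.Icc (0 : ℝ) 1,
      |k τ r - k q r - k τ s + k q s| ≤
        ck * min ((q - r) ^ (-γ - β) * (r - s) ^ β)
          ((q - r) ^ (-γ - η) * (τ - q) ^ η))

/-- A partition of `[s,t]` given by `N` consecutive intervals with
endpoints `π 0 = s < π 1 < ⋯ < π N = t`. -/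
def IsPartition (s t : ℝ) (N : ℕ) (π : ℕ → ℝ) : Prop :=
  π 0 = s ∧ π N = t ∧ ∀ i < N, π i < π (i + 1)

/-- The open simplex `{a < r_0 < r_1 < ⋯ < r_n < b}`. -/
def simplexSet (n : ℕ) (a b : ℝ) : Set (Fin (n + 1) → ℝ) :=
  {r | StrictMono r ∧ ∀ i, r i ∈ Set.Ioo a b}

/-- The iterated Volterra integral of order `n+1` of a `C¹` path. -/
noncomputable def volterraIter {E G : Type*} [NormedAddCommGroup E] [NormedSpace ℝ E]
    [NormedAddCommGroup G] [NormedSpace ℝ G] {n : ℕ}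
    (ι : ContinuousMultilinearMap ℝ (fun _ : Fin (n + 1) => E) G)
    (k : ℝ → ℝ → ℝ) (x : ℝ → E) (a b σ : ℝ) : G :=
  ∫ r in simplexSet n a b,
    (k σ (r (Fin.last n)) * ∏ j : Fin n, k (r j.succ) (r j.castSucc)) •
      ι (fun i => deriv x (r i))


/-- 1-D step bound: `∫_a^b (b-x)^{-γ'} (x-a)^e dx ≤ (1-γ')⁻¹ (b-a)^{1-γ'+e}`. -/
lemma step_lintegral {γ' e a b : ℝ} (hγ0 : 0 ≤ γ') (hγ1 : γ' < 1) (he : 0 ≤ e) (hab : a < b) :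
    ∫⁻ x in Set.Ioo a b, ENNReal.ofReal ((b - x) ^ (-γ') * (x - a) ^ e) ≤
      ENNReal.ofReal ((1 - γ')⁻¹ * (b - a) ^ (1 - γ' + e)) := by
  have h1 : ∀ x ∈ Set.Ioo a b, ENNReal.ofReal ((b - x) ^ (-γ') * (x - a) ^ e) ≤
      ENNReal.ofReal ((b - a) ^ e) * ENNReal.ofReal ((b - x) ^ (-γ')) := by
    intro x hx
    obtain ⟨hx1, hx2⟩ := hx
    rw [← ENNReal.ofReal_mul (Real.rpow_nonneg (by linarith) _)]
    apply ENNReal.ofReal_le_ofReal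
    rw [mul_comm ((b-a) ^ e)]
    exact mul_le_mul_of_nonneg_left
      (Real.rpow_le_rpow (by linarith) (by linarith) he)
      (Real.rpow_nonneg (by linarith) _)
  calc ∫⁻ x in Set.Ioo a b, ENNReal.ofReal ((b - x) ^ (-γ') * (x - a) ^ e)
      ≤ ∫⁻ x in Set.Ioo a b, ENNReal.ofReal ((b - a) ^ e) * ENNReal.ofReal ((b - x) ^ (-γ')) :=
        setLIntegral_mono_ae (by fun_prop) (Filter.Eventually.of_forall h1)
    _ = ENNReal.ofReal ((b - a) ^ e) * ∫⁻ x in Set.Ioo a b, ENNReal.ofReal ((b - x) ^ (-γ')) := by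
        rw [lintegral_const_mul]; fun_prop
    _ ≤ ENNReal.ofReal ((1 - γ')⁻¹ * (b - a) ^ (1 - γ' + e)) := by
        have hInt : IntegrableOn (fun x => (b - x) ^ (-γ')) (Set.Ioo a b) := by
          have h2 : IntervalIntegrable (fun x => (b - x) ^ (-γ')) volume a b := by
            have h3 := (intervalIntegral.intervalIntegrable_rpow' (r := -γ') (by linarith)
              (a := b - b) (b := b - a)).comp_sub_left b
            exact (by simpa using h3 : IntervalIntegrable _ volume b a).symm
          exact (intervalIntegrable_iff_integrableOn_Ioo_of_le hab.le).mp h2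
        have hnn : ∀ x ∈ Set.Ioo a b, 0 ≤ (b - x) ^ (-γ') := by
          intro x hx; exact Real.rpow_nonneg (by linarith [hx.2]) _
        rw [← ofReal_integral_eq_lintegral_ofReal hInt
          ((ae_restrict_iff' measurableSet_Ioo).2 (Filter.Eventually.of_forall hnn))]
        rw [← ENNReal.ofReal_mul (Real.rpow_nonneg (by linarith : (0:ℝ) ≤ b - a) _)]
        apply ENNReal.ofReal_le_ofReal
        have hval : ∫ x in Set.Ioo a b, (b - x) ^ (-γ') = ((b-a) ^ (1 - γ') - 0)/(1 - γ') := by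
          rw [← MeasureTheory.integral_Ioc_eq_integral_Ioo,
            ← intervalIntegral.integral_of_le hab.le,
            intervalIntegral.integral_comp_sub_left (fun x => x ^ (-γ')) b,
            integral_rpow (Or.inl (by linarith)), sub_self, Real.zero_rpow (by linarith)]
          norm_num [neg_add_eq_sub]
        rw [hval]
        rw [sub_zero, div_eq_inv_mul]
        rw [Real.rpow_add (by linarith)]
        calc (b-a)^e * ((1-γ')⁻¹ * (b-a)^(1-γ'))
            = (1-γ')⁻¹ * ((b-a)^(1-γ') * (b-a)^e) := by ring
          _ ≤ (1-γ')⁻¹ * ((b-a)^(1-γ') * (b-a)^e) := le_rfl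


/-- The singular bound function on the simplex. -/
noncomputable def sBound (n : ℕ) (γ₁ γ₂ e a b : ℝ) (w : Fin (n + 1) → ℝ) : ℝ :=
  (b - w (Fin.last n)) ^ (-γ₂) * (∏ j : Fin n, (w j.succ - w j.castSucc) ^ (-γ₁)) *
    (w 0 - a) ^ e

lemma measurableSet_simplexSet {n : ℕ} {a b : ℝ} : MeasurableSet (simplexSet n a b) := by
  have h1 : simplexSet n a b =
      (⋂ j : Fin n, {r : Fin (n+1) → ℝ | r j.castSucc < r j.succ}) ∩
      (⋂ i : Fin (n+1), {r | r i ∈ Set.Ioo a b}) := by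
    ext r
    simp only [simplexSet, Set.mem_setOf_eq, Set.mem_inter_iff, Set.mem_iInter,
      Fin.strictMono_iff_lt_succ]
  rw [h1]
  apply MeasurableSet.inter
  · apply MeasurableSet.iInter
    intro j
    exact measurableSet_lt (measurable_pi_apply _) (measurable_pi_apply _)
  · apply MeasurableSet.iInter
    intro i
    exact (measurable_pi_apply i) measurableSet_Ioo

lemma measurable_sBound {n : ℕ} {γ₁ γ₂ e a b : ℝ} : Measurable (sBound n γ₁ γ₂ e a b) := by
  unfold sBound
  fun_prop

lemma cons_mem_simplexSet_iff {n : ℕ} {a b x : ℝ} {w : Fin (n + 1) → ℝ} :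
    Fin.cons x w ∈ simplexSet (n + 1) a b ↔ x ∈ Set.Ioo a (w 0) ∧ w ∈ simplexSet n a b := by
  simp only [simplexSet, Set.mem_setOf_eq, Fin.strictMono_iff_lt_succ]
  constructor
  · rintro ⟨hm, hI⟩
    have h0 : x < w 0 := by
      have := hm 0
      simpa using this
    refine ⟨⟨(hI 0).1, h0⟩, fun i => ?_, fun i => ?_⟩
    · have := hm i.succ
      rwa [← Fin.succ_castSucc, Fin.cons_succ, Fin.cons_succ] at this
    · have := hI i.succ
      rwa [Fin.cons_succ] at this
  · rintro ⟨⟨hax, hxw⟩, hm, hI⟩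
    constructor
    · intro i
      induction i using Fin.cases with
      | zero => simpa using hxw
      | succ i => rw [← Fin.succ_castSucc, Fin.cons_succ, Fin.cons_succ]; exact hm i
    · intro i
      induction i using Fin.cases with
      | zero => exact ⟨hax, lt_trans hxw (hI 0).2⟩
      | succ i => rw [Fin.cons_succ]; exact hI i

lemma simplex_lintegral_le {γ₁ γ₂ : ℝ} (hγ₁0 : 0 ≤ γ₁) (hγ₁1 : γ₁ < 1) (hγ₂0 : 0 ≤ γ₂)
    (hγ₂1 : γ₂ < 1) (n : ℕ) :
    ∀ e a b : ℝ, 0 ≤ e → a < b →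
    ∫⁻ w in simplexSet n a b, ENNReal.ofReal (sBound n γ₁ γ₂ e a b w) ≤
      ENNReal.ofReal (((1 - γ₁)⁻¹) ^ n * (1 - γ₂)⁻¹ *
        (b - a) ^ ((n : ℝ) * (1 - γ₁) + (1 - γ₂) + e)) := by
  induction n with
  | zero =>
    intro e a b he hab
    have mp := (MeasureTheory.volume_preserving_funUnique (Fin 1) ℝ).symm
    rw [← lintegral_indicator measurableSet_simplexSet]
    erw [← mp.lintegral_comp (measurable_sBound.ennreal_ofReal.indicator measurableSet_simplexSet)]
    have h1 : ∀ y : ℝ, (simplexSet 0 a b).indicator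
        (fun w => ENNReal.ofReal (sBound 0 γ₁ γ₂ e a b w)) ((MeasurableEquiv.funUnique (Fin 1) ℝ).symm y) =
        (Set.Ioo a b).indicator (fun y => ENNReal.ofReal ((b - y) ^ (-γ₂) * (y - a) ^ e)) y := by
      intro y
      have hy : (MeasurableEquiv.funUnique (Fin 1) ℝ).symm y = fun _ => y := rfl
      rw [hy]
      have hmem : (fun _ : Fin 1 => y) ∈ simplexSet 0 a b ↔ y ∈ Set.Ioo a b := by
        simp [simplexSet, Subsingleton.strictMono]
      by_cases h : y ∈ Set.Ioo a b
      · rw [Set.indicator_of_mem (hmem.mpr h), Set.indicator_of_mem h]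
        simp [sBound]
      · rw [Set.indicator_of_notMem (fun hc => h (hmem.mp hc)), Set.indicator_of_notMem h]
    simp_rw [h1]
    rw [lintegral_indicator measurableSet_Ioo]
    refine le_trans (step_lintegral hγ₂0 hγ₂1 he hab) ?_
    apply ENNReal.ofReal_le_ofReal
    apply le_of_eq
    push_cast
    rw [show (0:ℝ) * (1 - γ₁) + (1 - γ₂) + e = 1 - γ₂ + e by ring, pow_zero, one_mul]
  | succ n IH =>
    intro e a b he hab
    set F : (Fin (n + 2) → ℝ) → ENNReal := fun w => ENNReal.ofReal (sBound (n+1) γ₁ γ₂ e a b w)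
      with hF
    have hFm : Measurable F := measurable_sBound.ennreal_ofReal
    set G := (simplexSet (n+1) a b).indicator F with hGdef
    have hGm : Measurable G := hFm.indicator measurableSet_simplexSet
    have key : ∫⁻ w in simplexSet (n+1) a b, F w =
        ∫⁻ w' : Fin (n+1) → ℝ, ∫⁻ x : ℝ, G (Fin.cons x w') ∂volume ∂volume := by
      rw [← lintegral_indicator measurableSet_simplexSet, ← hGdef]
      rw [show (volume : Measure (Fin (n+2) → ℝ)) = Measure.pi fun _ => volume from volume_pi]
      rw [← (MeasurePreserving.symm _ (measurePreserving_piFinSuccAbove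
        (fun _ : Fin (n+2) => (volume : Measure ℝ)) 0)).lintegral_comp hGm]
      rw [lintegral_prod_symm'
        (fun p : ℝ × (Fin (n+1) → ℝ) =>
          G ((MeasurableEquiv.piFinSuccAbove (fun _ : Fin (n+2) => ℝ) 0).symm p))
        (hGm.comp (MeasurableEquiv.measurable _))]
      rw [← volume_pi]
      have symm_apply : ∀ p : ℝ × (Fin (n+1) → ℝ),
          (MeasurableEquiv.piFinSuccAbove (fun _ : Fin (n+2) => ℝ) 0).symm p =
            Fin.cons p.1 p.2 := by
        intro p
        simp [MeasurableEquiv.piFinSuccAbove_symm_apply, Fin.insertNthEquiv,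
          Fin.insertNth_zero']
      simp_rw [symm_apply]
    rw [key]
    -- rewrite G (cons x w') as nested indicator
    have G_cons : ∀ (x : ℝ) (w' : Fin (n+1) → ℝ), G (Fin.cons x w') =
        (simplexSet n a b).indicator (fun w' => (Set.Ioo a (w' 0)).indicator (fun x =>
          ENNReal.ofReal ((b - w' (Fin.last n)) ^ (-γ₂) *
            ((w' 0 - x) ^ (-γ₁) * ∏ j : Fin n, (w' j.succ - w' j.castSucc) ^ (-γ₁)) *
            (x - a) ^ e)) x) w' := by
      intro x w'
      have hcons : sBound (n+1) γ₁ γ₂ e a b (Fin.cons x w') =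
          (b - w' (Fin.last n)) ^ (-γ₂) *
            ((w' 0 - x) ^ (-γ₁) * ∏ j : Fin n, (w' j.succ - w' j.castSucc) ^ (-γ₁)) *
            (x - a) ^ e := by
        have e1 : (Fin.cons x w' : Fin (n+2) → ℝ) (Fin.last (n+1)) = w' (Fin.last n) := by
          rw [← Fin.succ_last, Fin.cons_succ]
        have e2 : ∏ j : Fin (n+1), ((Fin.cons x w' : Fin (n+2) → ℝ) j.succ -
              (Fin.cons x w' : Fin (n+2) → ℝ) j.castSucc) ^ (-γ₁) =
            (w' 0 - x) ^ (-γ₁) * ∏ j : Fin n, (w' j.succ - w' j.castSucc) ^ (-γ₁) := by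
          rw [Fin.prod_univ_succ]
          simp only [Fin.castSucc_zero, Fin.cons_zero, Fin.cons_succ, ← Fin.succ_castSucc]
        have e3 : (Fin.cons x w' : Fin (n+2) → ℝ) 0 = x := Fin.cons_zero _ _
        unfold sBound
        rw [e1, e2, e3]
      by_cases h : Fin.cons x w' ∈ simplexSet (n+1) a b
      · obtain ⟨hx, hw⟩ := cons_mem_simplexSet_iff.mp h
        rw [hGdef, Set.indicator_of_mem h, Set.indicator_of_mem hw, Set.indicator_of_mem hx]
        show ENNReal.ofReal (sBound (n+1) γ₁ γ₂ e a b (Fin.cons x w')) = _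
        rw [hcons]
      · rw [hGdef, Set.indicator_of_notMem h]
        by_cases hw : w' ∈ simplexSet n a b
        · rw [Set.indicator_of_mem hw, Set.indicator_of_notMem]
          intro hx
          exact h (cons_mem_simplexSet_iff.mpr ⟨hx, hw⟩)
        · rw [Set.indicator_of_notMem hw]
    have inner_le : ∀ w' : Fin (n+1) → ℝ, ∫⁻ x : ℝ, G (Fin.cons x w') ∂volume ≤
        (simplexSet n a b).indicator (fun w' => ENNReal.ofReal ((1 - γ₁)⁻¹) *
          ENNReal.ofReal (sBound n γ₁ γ₂ (e + 1 - γ₁) a b w')) w' := by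
      intro w'
      simp_rw [G_cons]
      by_cases hw : w' ∈ simplexSet n a b
      · simp only [Set.indicator_of_mem hw]
        rw [lintegral_indicator measurableSet_Ioo]
        obtain ⟨hsm, hIoo⟩ := hw
        have hA : 0 ≤ (b - w' (Fin.last n)) ^ (-γ₂) :=
          Real.rpow_nonneg (by linarith [(hIoo (Fin.last n)).2]) _
        have hP : 0 ≤ ∏ j : Fin n, (w' j.succ - w' j.castSucc) ^ (-γ₁) :=
          Finset.prod_nonneg fun j _ =>
            Real.rpow_nonneg (by linarith [hsm (Fin.castSucc_lt_succ (i := j))]) _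
        have hAP : 0 ≤ (b - w' (Fin.last n)) ^ (-γ₂) *
            ∏ j : Fin n, (w' j.succ - w' j.castSucc) ^ (-γ₁) := mul_nonneg hA hP
        have split : ∀ x : ℝ,
            ENNReal.ofReal ((b - w' (Fin.last n)) ^ (-γ₂) *
              ((w' 0 - x) ^ (-γ₁) * ∏ j : Fin n, (w' j.succ - w' j.castSucc) ^ (-γ₁)) *
              (x - a) ^ e) =
            ENNReal.ofReal ((b - w' (Fin.last n)) ^ (-γ₂) *
              ∏ j : Fin n, (w' j.succ - w' j.castSucc) ^ (-γ₁)) *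
            ENNReal.ofReal ((w' 0 - x) ^ (-γ₁) * (x - a) ^ e) := by
          intro x
          rw [← ENNReal.ofReal_mul hAP]
          congr 1
          ring
        simp_rw [split]
        rw [lintegral_const_mul _ (by fun_prop)]
        have hstep := step_lintegral hγ₁0 hγ₁1 he (hIoo 0).1
        calc ENNReal.ofReal ((b - w' (Fin.last n)) ^ (-γ₂) *
              ∏ j : Fin n, (w' j.succ - w' j.castSucc) ^ (-γ₁)) *
            ∫⁻ x in Set.Ioo a (w' 0), ENNReal.ofReal ((w' 0 - x) ^ (-γ₁) * (x - a) ^ e)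
            ≤ ENNReal.ofReal ((b - w' (Fin.last n)) ^ (-γ₂) *
                ∏ j : Fin n, (w' j.succ - w' j.castSucc) ^ (-γ₁)) *
              ENNReal.ofReal ((1 - γ₁)⁻¹ * (w' 0 - a) ^ (1 - γ₁ + e)) :=
              mul_le_mul_right hstep _
          _ = ENNReal.ofReal ((1 - γ₁)⁻¹) * ENNReal.ofReal (sBound n γ₁ γ₂ (e + 1 - γ₁) a b w') := by
              rw [← ENNReal.ofReal_mul hAP,
                ← ENNReal.ofReal_mul (inv_nonneg.2 (by linarith : (0:ℝ) ≤ 1 - γ₁))]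
              congr 1
              unfold sBound
              rw [show 1 - γ₁ + e = e + 1 - γ₁ by ring]
              ring
      · simp only [Set.indicator_of_notMem hw]
        simp
    calc ∫⁻ w' : Fin (n+1) → ℝ, ∫⁻ x : ℝ, G (Fin.cons x w') ∂volume ∂volume
        ≤ ∫⁻ w' : Fin (n+1) → ℝ, (simplexSet n a b).indicator
            (fun w' => ENNReal.ofReal ((1 - γ₁)⁻¹) *
              ENNReal.ofReal (sBound n γ₁ γ₂ (e + 1 - γ₁) a b w')) w' ∂volume :=
          lintegral_mono inner_le
      _ = ENNReal.ofReal ((1 - γ₁)⁻¹) *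
            ∫⁻ w' in simplexSet n a b, ENNReal.ofReal (sBound n γ₁ γ₂ (e + 1 - γ₁) a b w') := by
          rw [lintegral_indicator measurableSet_simplexSet,
            lintegral_const_mul _ measurable_sBound.ennreal_ofReal]
      _ ≤ ENNReal.ofReal ((1 - γ₁)⁻¹) * ENNReal.ofReal (((1 - γ₁)⁻¹) ^ n * (1 - γ₂)⁻¹ *
            (b - a) ^ ((n : ℝ) * (1 - γ₁) + (1 - γ₂) + (e + 1 - γ₁))) :=
          mul_le_mul_right (IH (e + 1 - γ₁) a b (by linarith) hab) _
      _ ≤ ENNReal.ofReal (((1 - γ₁)⁻¹) ^ (n + 1) * (1 - γ₂)⁻¹ *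
            (b - a) ^ (((n + 1 : ℕ) : ℝ) * (1 - γ₁) + (1 - γ₂) + e)) := by
          rw [← ENNReal.ofReal_mul (inv_nonneg.2 (by linarith : (0:ℝ) ≤ 1 - γ₁))]
          apply ENNReal.ofReal_le_ofReal
          apply le_of_eq
          push_cast
          rw [show ((n : ℝ) + 1) * (1 - γ₁) + (1 - γ₂) + e =
            (n : ℝ) * (1 - γ₁) + (1 - γ₂) + (e + 1 - γ₁) by ring]
          rw [pow_succ]
          ring

lemma sBound_nonneg_on {n : ℕ} {γ₁ γ₂ e a b : ℝ} {w : Fin (n+1) → ℝ}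
    (hw : w ∈ simplexSet n a b) : 0 ≤ sBound n γ₁ γ₂ e a b w := by
  obtain ⟨hsm, hI⟩ := hw
  have h1 : 0 ≤ (b - w (Fin.last n)) ^ (-γ₂) :=
    Real.rpow_nonneg (by linarith [(hI (Fin.last n)).2]) _
  have h2 : 0 ≤ ∏ j : Fin n, (w j.succ - w j.castSucc) ^ (-γ₁) :=
    Finset.prod_nonneg fun j _ =>
      Real.rpow_nonneg (by linarith [hsm (Fin.castSucc_lt_succ (i := j))]) _
  have h3 : 0 ≤ (w 0 - a) ^ e := Real.rpow_nonneg (by linarith [(hI 0).1]) _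
  exact mul_nonneg (mul_nonneg h1 h2) h3

lemma sBound_integral {γ₁ γ₂ : ℝ} (hγ₁0 : 0 ≤ γ₁) (hγ₁1 : γ₁ < 1) (hγ₂0 : 0 ≤ γ₂)
    (hγ₂1 : γ₂ < 1) (n : ℕ) {e a b : ℝ} (he : 0 ≤ e) (hab : a < b) :
    IntegrableOn (sBound n γ₁ γ₂ e a b) (simplexSet n a b) ∧
    ∫ w in simplexSet n a b, sBound n γ₁ γ₂ e a b w ≤
      ((1 - γ₁)⁻¹) ^ n * (1 - γ₂)⁻¹ * (b - a) ^ ((n : ℝ) * (1 - γ₁) + (1 - γ₂) + e) := by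
  have hnn : 0 ≤ᵐ[volume.restrict (simplexSet n a b)] sBound n γ₁ γ₂ e a b := by
    rw [Filter.EventuallyLE, ae_restrict_iff' measurableSet_simplexSet]
    exact Filter.Eventually.of_forall fun w hw => sBound_nonneg_on hw
  have heq : ∫⁻ w in simplexSet n a b, (‖sBound n γ₁ γ₂ e a b w‖₊ : ENNReal) =
      ∫⁻ w in simplexSet n a b, ENNReal.ofReal (sBound n γ₁ γ₂ e a b w) :=
    lintegral_congr_ae (hnn.mono fun w hw => by
      simp only []
      exact Real.enorm_eq_ofReal (by simpa using hw))
  have hfin := simplex_lintegral_le hγ₁0 hγ₁1 hγ₂0 hγ₂1 n e a b he hab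
  constructor
  · refine ⟨measurable_sBound.aestronglyMeasurable, ?_⟩
    rw [HasFiniteIntegral]; refine lt_of_eq_of_lt heq ?_
    exact lt_of_le_of_lt hfin ENNReal.ofReal_lt_top
  · rw [integral_eq_lintegral_of_nonneg_ae hnn measurable_sBound.aestronglyMeasurable.restrict]
    calc (∫⁻ w in simplexSet n a b, ENNReal.ofReal (sBound n γ₁ γ₂ e a b w)).toReal
        ≤ (ENNReal.ofReal (((1 - γ₁)⁻¹) ^ n * (1 - γ₂)⁻¹ *
            (b - a) ^ ((n : ℝ) * (1 - γ₁) + (1 - γ₂) + e))).toReal :=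
          ENNReal.toReal_mono ENNReal.ofReal_ne_top hfin
      _ ≤ _ := by rw [ENNReal.toReal_ofReal']; exact max_le le_rfl (mul_nonneg (mul_nonneg (pow_nonneg (inv_nonneg.2 (by linarith)) _)
          (inv_nonneg.2 (by linarith))) (Real.rpow_nonneg (by linarith) _))

set_option maxHeartbeats 2000000

theorem statement5 {E G H : Type*} [NormedAddCommGroup E] [NormedSpace ℝ E] [CompleteSpace E]
    [NormedAddCommGroup G] [NormedSpace ℝ G] [CompleteSpace G]
    [NormedAddCommGroup H] [NormedSpace ℝ H] [CompleteSpace H]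
    (T γ ck : ℝ) (hT : 0 < T) (hγ0 : 0 < γ) (hγ1 : γ < 1 / 2) (hck : 0 ≤ ck)
    (k : ℝ → ℝ → ℝ) (hkm : Measurable (Function.uncurry k)) (hk : HypH T γ ck k)
    (x : ℝ → E) (hx : ContDiff ℝ 1 x)
    (n' m' : ℕ)
    (ιn : ContinuousMultilinearMap ℝ (fun _ : Fin (n' + 1) => E) G)
    (hιn : ∀ v, ‖ιn v‖ ≤ ∏ i, ‖v i‖)
    (B : G →L[ℝ] ContinuousMultilinearMap ℝ (fun _ : Fin (m' + 1) => E) H)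
    (hB : ∀ g v, ‖B g v‖ ≤ ‖g‖ * ∏ i, ‖v i‖)
    (s t τ : ℝ) (hs : 0 ≤ s) (hst : s < t) (htτ : t ≤ τ) (hτT : τ ≤ T) :
    ∀ ε > 0, ∃ δ > 0, ∀ (N : ℕ) (π : ℕ → ℝ), IsPartition s t N π →
      (∀ i < N, π (i + 1) - π i < δ) →
      (∑ i ∈ Finset.range N,
          ‖∫ w in simplexSet m' (π i) (π (i + 1)),
              (k τ (w (Fin.last m')) * ∏ j : Fin m', k (w j.succ) (w j.castSucc)) •
                (B (volterraIter ιn k x s (π i) (w 0) -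
                    volterraIter ιn k x s (π i) (π i)))
                  (fun l => deriv x (w l))‖) < ε := by
  intro ε hε
  obtain ⟨hk1, hk2, hk3, hk4⟩ := hk
  have hγ1' : γ < 1 := by linarith
  have hγ2 : γ + 1/2 < 1 := by linarith
  have hγ2' : (0:ℝ) ≤ γ + 1/2 := by linarith
  -- bound on the derivative of `x` on `[0, T]`
  obtain ⟨M, hM0, hMb⟩ : ∃ M : ℝ, 0 ≤ M ∧ ∀ y ∈ Set.Icc (0:ℝ) T, ‖deriv x y‖ ≤ M := by
    obtain ⟨C, hC⟩ := (isCompact_Icc (a := (0:ℝ)) (b := T)).exists_bound_of_continuousOn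
      (hx.continuous_deriv le_rfl).continuousOn
    exact ⟨max C 0, le_max_right _ _, fun y hy => (hC y hy).trans (le_max_left _ _)⟩
  have hDc : Continuous (deriv x) := hx.continuous_deriv le_rfl
  -- measurability of the inner integrand
  have hinner_meas : ∀ σ u : ℝ, AEStronglyMeasurable
      (fun r : Fin (n' + 1) → ℝ =>
        (k σ (r (Fin.last n')) * ∏ j : Fin n', k (r j.succ) (r j.castSucc)) •
          ιn (fun i => deriv x (r i))) (volume.restrict (simplexSet n' s u)) := by
    intro σ u
    have h1 : Measurable fun r : Fin (n' + 1) → ℝ =>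
        k σ (r (Fin.last n')) * ∏ j : Fin n', k (r j.succ) (r j.castSucc) := by
      apply Measurable.mul
      · have h0 : Measurable fun r : Fin (n' + 1) → ℝ =>
            Function.uncurry k (σ, r (Fin.last n')) :=
          hkm.comp (measurable_const.prodMk (measurable_pi_apply _))
        exact h0
      · refine Finset.measurable_prod _ fun j _ => ?_
        have h0 : Measurable fun r : Fin (n' + 1) → ℝ =>
            Function.uncurry k (r j.succ, r j.castSucc) :=
          hkm.comp ((measurable_pi_apply _).prodMk (measurable_pi_apply _))
        exact h0
    have h2 : Continuous fun r : Fin (n' + 1) → ℝ => ιn (fun i => deriv x (r i)) :=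
      ιn.cont.comp (continuous_pi fun i => hDc.comp (continuous_apply i))
    exact ((h1.stronglyMeasurable.smul h2.stronglyMeasurable).aestronglyMeasurable).restrict
  -- kernel product bound on a simplex
  have hprodbound : ∀ (p : ℕ) (c d : ℝ), 0 ≤ c → d ≤ T →
      ∀ r : Fin (p + 1) → ℝ, r ∈ simplexSet p c d →
      |∏ j : Fin p, k (r j.succ) (r j.castSucc)| ≤
        ck ^ p * ∏ j : Fin p, (r j.succ - r j.castSucc) ^ (-γ) := by
    intro p c d hc hd r hr
    obtain ⟨hsm, hI⟩ := hr
    rw [Finset.abs_prod]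
    refine le_trans (Finset.prod_le_prod (fun _ _ => abs_nonneg _) (fun j _ =>
      hk1 (r j.castSucc) (r j.succ) (by linarith [(hI j.castSucc).1])
        (hsm (Fin.castSucc_lt_succ (i := j))) (by linarith [(hI j.succ).2]))) ?_
    rw [Finset.prod_mul_distrib, Finset.prod_const, Finset.card_univ, Fintype.card_fin]
  -- integrability of the inner integrand
  have hZint : ∀ u σ : ℝ, s < u → u ≤ t → u ≤ σ → σ ≤ t →
      IntegrableOn (fun r : Fin (n' + 1) → ℝ =>
        (k σ (r (Fin.last n')) * ∏ j : Fin n', k (r j.succ) (r j.castSucc)) •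
          ιn (fun i => deriv x (r i))) (simplexSet n' s u) := by
    intro u σ hsu hut huσ hσt
    have hg : IntegrableOn (fun r => (ck ^ (n' + 1) * M ^ (n' + 1)) *
        sBound n' γ γ 0 s u r) (simplexSet n' s u) :=
      ((sBound_integral hγ0.le hγ1' hγ0.le hγ1' n' le_rfl hsu).1).const_mul _
    refine Integrable.mono' hg (hinner_meas σ u) ?_
    rw [ae_restrict_iff' measurableSet_simplexSet]
    refine Filter.Eventually.of_forall fun r hr => ?_
    obtain ⟨hsm, hI⟩ := hr
    have hrl : r (Fin.last n') < u := (hI _).2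
    have hrl0 : 0 ≤ r (Fin.last n') := by linarith [(hI (Fin.last n')).1]
    have hupos : (0:ℝ) < u - r (Fin.last n') := by linarith
    have hk1' : |k σ (r (Fin.last n'))| ≤ ck * (u - r (Fin.last n')) ^ (-γ) := by
      refine le_trans (hk1 _ σ hrl0 (by linarith) (by linarith)) ?_
      exact mul_le_mul_of_nonneg_left
        (Real.rpow_le_rpow_of_nonpos hupos (by linarith) (by linarith)) hck
    have hι : ‖ιn (fun i => deriv x (r i))‖ ≤ M ^ (n' + 1) := by
      refine le_trans (hιn _) ?_
      calc ∏ i, ‖deriv x (r i)‖ ≤ ∏ _i : Fin (n'+1), M :=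
          Finset.prod_le_prod (fun _ _ => norm_nonneg _) (fun i _ =>
            hMb (r i) ⟨by linarith [(hI i).1], by linarith [(hI i).2]⟩)
        _ = M ^ (n' + 1) := by rw [Finset.prod_const, Finset.card_univ, Fintype.card_fin]
    have hP := hprodbound n' s u hs (by linarith) r ⟨hsm, hI⟩
    have hPnn : (0:ℝ) ≤ ∏ j : Fin n', (r j.succ - r j.castSucc) ^ (-γ) :=
      Finset.prod_nonneg fun j _ =>
        Real.rpow_nonneg (by linarith [hsm (Fin.castSucc_lt_succ (i := j))]) _
    calc ‖(k σ (r (Fin.last n')) * ∏ j : Fin n', k (r j.succ) (r j.castSucc)) •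
          ιn (fun i => deriv x (r i))‖
        = |k σ (r (Fin.last n'))| * |∏ j : Fin n', k (r j.succ) (r j.castSucc)| *
          ‖ιn (fun i => deriv x (r i))‖ := by
          rw [norm_smul, Real.norm_eq_abs, abs_mul]
      _ ≤ (ck * (u - r (Fin.last n')) ^ (-γ)) *
            (ck ^ n' * ∏ j : Fin n', (r j.succ - r j.castSucc) ^ (-γ)) * M ^ (n' + 1) :=
          mul_le_mul (mul_le_mul hk1' hP (abs_nonneg _)
              (mul_nonneg hck (Real.rpow_nonneg hupos.le _)))
            hι (norm_nonneg _)
            (mul_nonneg (mul_nonneg hck (Real.rpow_nonneg hupos.le _))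
              (mul_nonneg (pow_nonneg hck _) hPnn))
      _ = (ck ^ (n' + 1) * M ^ (n' + 1)) * sBound n' γ γ 0 s u r := by
          unfold sBound
          rw [Real.rpow_zero, pow_succ]
          ring
  -- the increment bound for `Z`
  have hp1nn : (0:ℝ) ≤ (n' : ℝ) * (1 - γ) + (1 - (γ + 1/2)) + 0 := by
    have h0 : (0:ℝ) ≤ (n' : ℝ) * (1 - γ) := mul_nonneg (Nat.cast_nonneg _) (by linarith)
    linarith
  have hCZ0 : (0:ℝ) ≤ ck ^ (n' + 1) * M ^ (n' + 1) *
      (((1 - γ)⁻¹) ^ n' * (1 - (γ + 1/2))⁻¹ *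
        (t - s) ^ ((n' : ℝ) * (1 - γ) + (1 - (γ + 1/2)) + 0)) := by
    apply mul_nonneg (mul_nonneg (pow_nonneg hck _) (pow_nonneg hM0 _))
    exact mul_nonneg (mul_nonneg (pow_nonneg (inv_nonneg.2 (by linarith)) _)
      (inv_nonneg.2 (by linarith))) (Real.rpow_nonneg (by linarith) _)
  obtain ⟨CZ, hCZnn, hZdiff⟩ : ∃ CZ : ℝ, 0 ≤ CZ ∧ ∀ u σ : ℝ, s ≤ u → u < σ → σ ≤ t →
      ‖volterraIter ιn k x s u σ - volterraIter ιn k x s u u‖ ≤ CZ * (σ - u) ^ (1/2 : ℝ) := by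
    refine ⟨ck ^ (n' + 1) * M ^ (n' + 1) *
      (((1 - γ)⁻¹) ^ n' * (1 - (γ + 1/2))⁻¹ *
        (t - s) ^ ((n' : ℝ) * (1 - γ) + (1 - (γ + 1/2)) + 0)), hCZ0, ?_⟩
    intro u σ hsu huσ hσt
    rcases eq_or_lt_of_le hsu with rfl | hsu'
    · have hempty : simplexSet n' s s = ∅ := by
        ext r
        simp only [simplexSet, Set.mem_setOf_eq, Set.mem_empty_iff_false, iff_false, not_and]
        exact fun _ h => by simpa using (h 0)
      unfold volterraIter
      simp only [hempty, Measure.restrict_empty, integral_zero_measure, sub_zero, norm_zero,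
        sub_self]
      exact mul_nonneg hCZ0 (Real.rpow_nonneg (by linarith) _)
    · have hint1 := hZint u σ hsu' (by linarith) huσ.le hσt
      have hint2 := hZint u u hsu' (by linarith) le_rfl (by linarith)
      have hgint : IntegrableOn (fun r => (ck ^ (n' + 1) * M ^ (n' + 1) *
          (σ - u) ^ (1/2:ℝ)) * sBound n' γ (γ + 1/2) 0 s u r) (simplexSet n' s u) :=
        ((sBound_integral hγ0.le hγ1' hγ2' hγ2 n' le_rfl hsu').1).const_mul _
      unfold volterraIter
      rw [← integral_sub hint1 hint2]
      calc ‖∫ r in simplexSet n' s u,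
            ((k σ (r (Fin.last n')) * ∏ j : Fin n', k (r j.succ) (r j.castSucc)) •
              ιn (fun i => deriv x (r i)) -
            (k u (r (Fin.last n')) * ∏ j : Fin n', k (r j.succ) (r j.castSucc)) •
              ιn (fun i => deriv x (r i)))‖
          ≤ ∫ r in simplexSet n' s u,
            ‖(k σ (r (Fin.last n')) * ∏ j : Fin n', k (r j.succ) (r j.castSucc)) •
              ιn (fun i => deriv x (r i)) -
            (k u (r (Fin.last n')) * ∏ j : Fin n', k (r j.succ) (r j.castSucc)) •
              ιn (fun i => deriv x (r i))‖ := norm_integral_le_integral_norm _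
        _ ≤ ∫ r in simplexSet n' s u, (ck ^ (n' + 1) * M ^ (n' + 1) * (σ - u) ^ (1/2:ℝ)) *
              sBound n' γ (γ + 1/2) 0 s u r := by
            apply integral_mono_of_nonneg
              (Filter.Eventually.of_forall fun r => norm_nonneg _) hgint
            rw [Filter.EventuallyLE, ae_restrict_iff' measurableSet_simplexSet]
            refine Filter.Eventually.of_forall fun r hr => ?_
            obtain ⟨hsm, hI⟩ := hr
            have hrl : r (Fin.last n') < u := (hI _).2
            have hrl0 : 0 ≤ r (Fin.last n') := by linarith [(hI (Fin.last n')).1]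
            have hupos : (0:ℝ) < u - r (Fin.last n') := by linarith
            have hdk := hk2 (r (Fin.last n')) u σ hrl0 hrl huσ (by linarith) (1/2)
              ⟨by norm_num, by norm_num⟩
            rw [show -γ - (1/2:ℝ) = -(γ + 1/2) by ring] at hdk
            have hι : ‖ιn (fun i => deriv x (r i))‖ ≤ M ^ (n' + 1) := by
              refine le_trans (hιn _) ?_
              calc ∏ i, ‖deriv x (r i)‖ ≤ ∏ _i : Fin (n'+1), M :=
                  Finset.prod_le_prod (fun _ _ => norm_nonneg _) (fun i _ =>
                    hMb (r i) ⟨by linarith [(hI i).1], by linarith [(hI i).2]⟩)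
                _ = M ^ (n' + 1) := by
                  rw [Finset.prod_const, Finset.card_univ, Fintype.card_fin]
            have hP := hprodbound n' s u hs (by linarith) r ⟨hsm, hI⟩
            have hPnn : (0:ℝ) ≤ ∏ j : Fin n', (r j.succ - r j.castSucc) ^ (-γ) :=
              Finset.prod_nonneg fun j _ =>
                Real.rpow_nonneg (by linarith [hsm (Fin.castSucc_lt_succ (i := j))]) _
            have hdknn : (0:ℝ) ≤ ck * ((u - r (Fin.last n')) ^ (-(γ + 1/2)) *
                (σ - u) ^ (1/2:ℝ)) :=
              mul_nonneg hck (mul_nonneg (Real.rpow_nonneg hupos.le _)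
                (Real.rpow_nonneg (by linarith) _))
            calc ‖(k σ (r (Fin.last n')) * ∏ j : Fin n', k (r j.succ) (r j.castSucc)) •
                  ιn (fun i => deriv x (r i)) -
                (k u (r (Fin.last n')) * ∏ j : Fin n', k (r j.succ) (r j.castSucc)) •
                  ιn (fun i => deriv x (r i))‖
                = |k σ (r (Fin.last n')) - k u (r (Fin.last n'))| *
                  |∏ j : Fin n', k (r j.succ) (r j.castSucc)| *
                  ‖ιn (fun i => deriv x (r i))‖ := by
                  rw [← sub_smul, ← sub_mul, norm_smul, Real.norm_eq_abs, abs_mul]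
              _ ≤ (ck * ((u - r (Fin.last n')) ^ (-(γ + 1/2)) * (σ - u) ^ (1/2:ℝ))) *
                    (ck ^ n' * ∏ j : Fin n', (r j.succ - r j.castSucc) ^ (-γ)) *
                    M ^ (n' + 1) :=
                  mul_le_mul (mul_le_mul hdk hP (abs_nonneg _) hdknn) hι (norm_nonneg _)
                    (mul_nonneg hdknn (mul_nonneg (pow_nonneg hck _) hPnn))
              _ = (ck ^ (n' + 1) * M ^ (n' + 1) * (σ - u) ^ (1/2:ℝ)) *
                    sBound n' γ (γ + 1/2) 0 s u r := by
                  unfold sBound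
                  rw [Real.rpow_zero, pow_succ]
                  ring
        _ = (ck ^ (n' + 1) * M ^ (n' + 1) * (σ - u) ^ (1/2:ℝ)) *
              ∫ r in simplexSet n' s u, sBound n' γ (γ + 1/2) 0 s u r :=
            integral_const_mul _ _
        _ ≤ (ck ^ (n' + 1) * M ^ (n' + 1) * (σ - u) ^ (1/2:ℝ)) *
              (((1 - γ)⁻¹) ^ n' * (1 - (γ + 1/2))⁻¹ *
                (u - s) ^ ((n' : ℝ) * (1 - γ) + (1 - (γ + 1/2)) + 0)) := by
            apply mul_le_mul_of_nonneg_left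
              (sBound_integral hγ0.le hγ1' hγ2' hγ2 n' le_rfl hsu').2
            exact mul_nonneg (mul_nonneg (pow_nonneg hck _) (pow_nonneg hM0 _))
              (Real.rpow_nonneg (by linarith) _)
        _ ≤ ck ^ (n' + 1) * M ^ (n' + 1) *
              (((1 - γ)⁻¹) ^ n' * (1 - (γ + 1/2))⁻¹ *
                (t - s) ^ ((n' : ℝ) * (1 - γ) + (1 - (γ + 1/2)) + 0)) *
              (σ - u) ^ (1/2:ℝ) := by
            have h1 : (u - s) ^ ((n' : ℝ) * (1 - γ) + (1 - (γ + 1/2)) + 0) ≤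
                (t - s) ^ ((n' : ℝ) * (1 - γ) + (1 - (γ + 1/2)) + 0) :=
              Real.rpow_le_rpow (by linarith) (by linarith) hp1nn
            have h2 : (0:ℝ) ≤ ((1 - γ)⁻¹) ^ n' * (1 - (γ + 1/2))⁻¹ :=
              mul_nonneg (pow_nonneg (inv_nonneg.2 (by linarith)) _)
                (inv_nonneg.2 (by linarith))
            have h3 : (0:ℝ) ≤ ck ^ (n' + 1) * M ^ (n' + 1) * (σ - u) ^ (1/2:ℝ) :=
              mul_nonneg (mul_nonneg (pow_nonneg hck _) (pow_nonneg hM0 _))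
                (Real.rpow_nonneg (by linarith) _)
            calc ck ^ (n' + 1) * M ^ (n' + 1) * (σ - u) ^ (1/2:ℝ) *
                  (((1 - γ)⁻¹) ^ n' * (1 - (γ + 1/2))⁻¹ *
                    (u - s) ^ ((n' : ℝ) * (1 - γ) + (1 - (γ + 1/2)) + 0))
                ≤ ck ^ (n' + 1) * M ^ (n' + 1) * (σ - u) ^ (1/2:ℝ) *
                  (((1 - γ)⁻¹) ^ n' * (1 - (γ + 1/2))⁻¹ *
                    (t - s) ^ ((n' : ℝ) * (1 - γ) + (1 - (γ + 1/2)) + 0)) := by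
                  apply mul_le_mul_of_nonneg_left _ h3
                  exact mul_le_mul_of_nonneg_left h1 h2
              _ = ck ^ (n' + 1) * M ^ (n' + 1) *
                  (((1 - γ)⁻¹) ^ n' * (1 - (γ + 1/2))⁻¹ *
                    (t - s) ^ ((n' : ℝ) * (1 - γ) + (1 - (γ + 1/2)) + 0)) *
                  (σ - u) ^ (1/2:ℝ) := by ring
  -- the per-interval bound
  have hθm : (0:ℝ) ≤ (m' : ℝ) * (1 - γ) := mul_nonneg (Nat.cast_nonneg _) (by linarith)
  have hterm : ∀ u v : ℝ, s ≤ u → u < v → v ≤ t →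
      ‖∫ w in simplexSet m' u v,
          (k τ (w (Fin.last m')) * ∏ j : Fin m', k (w j.succ) (w j.castSucc)) •
            (B (volterraIter ιn k x s u (w 0) - volterraIter ιn k x s u u))
              (fun l => deriv x (w l))‖ ≤
        (ck ^ (m' + 1) * M ^ (m' + 1) * CZ * (((1 - γ)⁻¹) ^ m' * (1 - γ)⁻¹)) *
          (v - u) ^ ((m' : ℝ) * (1 - γ) + (1 - γ) + 1/2) := by
    intro u v hsu huv hvt
    have hgint : IntegrableOn (fun w => (ck ^ (m' + 1) * M ^ (m' + 1) * CZ) *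
        sBound m' γ γ (1/2) u v w) (simplexSet m' u v) :=
      ((sBound_integral hγ0.le hγ1' hγ0.le hγ1' m' (by norm_num) huv).1).const_mul _
    calc ‖∫ w in simplexSet m' u v,
            (k τ (w (Fin.last m')) * ∏ j : Fin m', k (w j.succ) (w j.castSucc)) •
              (B (volterraIter ιn k x s u (w 0) - volterraIter ιn k x s u u))
                (fun l => deriv x (w l))‖
        ≤ ∫ w in simplexSet m' u v,
            ‖(k τ (w (Fin.last m')) * ∏ j : Fin m', k (w j.succ) (w j.castSucc)) •
              (B (volterraIter ιn k x s u (w 0) - volterraIter ιn k x s u u))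
                (fun l => deriv x (w l))‖ := norm_integral_le_integral_norm _
      _ ≤ ∫ w in simplexSet m' u v, (ck ^ (m' + 1) * M ^ (m' + 1) * CZ) *
            sBound m' γ γ (1/2) u v w := by
          apply integral_mono_of_nonneg
            (Filter.Eventually.of_forall fun w => norm_nonneg _) hgint
          rw [Filter.EventuallyLE, ae_restrict_iff' measurableSet_simplexSet]
          refine Filter.Eventually.of_forall fun w hw => ?_
          obtain ⟨hsm, hI⟩ := hw
          have hl : w (Fin.last m') < v := (hI _).2
          have hl0 : 0 ≤ w (Fin.last m') := by linarith [(hI (Fin.last m')).1]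
          have hvpos : (0:ℝ) < v - w (Fin.last m') := by linarith
          have hKτ : |k τ (w (Fin.last m'))| ≤ ck * (v - w (Fin.last m')) ^ (-γ) := by
            refine le_trans (hk1 _ τ hl0 (by linarith) (by linarith)) ?_
            exact mul_le_mul_of_nonneg_left
              (Real.rpow_le_rpow_of_nonpos hvpos (by linarith) (by linarith)) hck
          have hP := hprodbound m' u v (by linarith) (by linarith) w ⟨hsm, hI⟩
          have hPnn : (0:ℝ) ≤ ∏ j : Fin m', (w j.succ - w j.castSucc) ^ (-γ) :=
            Finset.prod_nonneg fun j _ =>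
              Real.rpow_nonneg (by linarith [hsm (Fin.castSucc_lt_succ (i := j))]) _
          have hZ := hZdiff u (w 0) hsu (hI 0).1 (by linarith [(hI 0).2])
          have hBv : ‖(B (volterraIter ιn k x s u (w 0) - volterraIter ιn k x s u u))
              (fun l => deriv x (w l))‖ ≤ (CZ * (w 0 - u) ^ (1/2:ℝ)) * M ^ (m' + 1) := by
            refine le_trans (hB _ _) ?_
            have hprodM : ∏ l, ‖deriv x (w l)‖ ≤ M ^ (m' + 1) := by
              calc ∏ l, ‖deriv x (w l)‖ ≤ ∏ _l : Fin (m'+1), M :=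
                  Finset.prod_le_prod (fun _ _ => norm_nonneg _) (fun l _ =>
                    hMb (w l) ⟨by linarith [(hI l).1], by linarith [(hI l).2]⟩)
                _ = M ^ (m' + 1) := by
                  rw [Finset.prod_const, Finset.card_univ, Fintype.card_fin]
            exact mul_le_mul hZ hprodM (Finset.prod_nonneg fun _ _ => norm_nonneg _)
              (mul_nonneg hCZnn (Real.rpow_nonneg (by linarith [(hI 0).1]) _))
          have hKnn : (0:ℝ) ≤ ck * (v - w (Fin.last m')) ^ (-γ) :=
            mul_nonneg hck (Real.rpow_nonneg hvpos.le _)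
          calc ‖(k τ (w (Fin.last m')) * ∏ j : Fin m', k (w j.succ) (w j.castSucc)) •
                (B (volterraIter ιn k x s u (w 0) - volterraIter ιn k x s u u))
                  (fun l => deriv x (w l))‖
              = |k τ (w (Fin.last m'))| * |∏ j : Fin m', k (w j.succ) (w j.castSucc)| *
                ‖(B (volterraIter ιn k x s u (w 0) - volterraIter ιn k x s u u))
                  (fun l => deriv x (w l))‖ := by
                rw [norm_smul, Real.norm_eq_abs, abs_mul]
            _ ≤ (ck * (v - w (Fin.last m')) ^ (-γ)) *
                  (ck ^ m' * ∏ j : Fin m', (w j.succ - w j.castSucc) ^ (-γ)) *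
                  ((CZ * (w 0 - u) ^ (1/2:ℝ)) * M ^ (m' + 1)) :=
                mul_le_mul (mul_le_mul hKτ hP (abs_nonneg _) hKnn) hBv (norm_nonneg _)
                  (mul_nonneg hKnn (mul_nonneg (pow_nonneg hck _) hPnn))
            _ = (ck ^ (m' + 1) * M ^ (m' + 1) * CZ) * sBound m' γ γ (1/2) u v w := by
                unfold sBound
                rw [pow_succ]
                ring
      _ = (ck ^ (m' + 1) * M ^ (m' + 1) * CZ) *
            ∫ w in simplexSet m' u v, sBound m' γ γ (1/2) u v w := integral_const_mul _ _
      _ ≤ (ck ^ (m' + 1) * M ^ (m' + 1) * CZ) *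
            (((1 - γ)⁻¹) ^ m' * (1 - γ)⁻¹ *
              (v - u) ^ ((m' : ℝ) * (1 - γ) + (1 - γ) + 1/2)) := by
          apply mul_le_mul_of_nonneg_left
            (sBound_integral hγ0.le hγ1' hγ0.le hγ1' m' (by norm_num) huv).2
          exact mul_nonneg (mul_nonneg (pow_nonneg hck _) (pow_nonneg hM0 _)) hCZnn
      _ = (ck ^ (m' + 1) * M ^ (m' + 1) * CZ * (((1 - γ)⁻¹) ^ m' * (1 - γ)⁻¹)) *
            (v - u) ^ ((m' : ℝ) * (1 - γ) + (1 - γ) + 1/2) := by ring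
  -- conclusion: choose the mesh size
  set K0 : ℝ := ck ^ (m' + 1) * M ^ (m' + 1) * CZ * (((1 - γ)⁻¹) ^ m' * (1 - γ)⁻¹) with hK0def
  set θ : ℝ := (m' : ℝ) * (1 - γ) + (1 - γ) + 1/2 with hθdef
  have hK0nn : 0 ≤ K0 := by
    rw [hK0def]
    exact mul_nonneg (mul_nonneg (mul_nonneg (pow_nonneg hck _) (pow_nonneg hM0 _)) hCZnn)
      (mul_nonneg (pow_nonneg (inv_nonneg.2 (by linarith)) _) (inv_nonneg.2 (by linarith)))
  have hθ1 : (1:ℝ) < θ := by rw [hθdef]; linarith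
  set D : ℝ := K0 * (t - s) + 1 with hDdef
  have hD : (0:ℝ) < D := by
    have := mul_nonneg hK0nn (by linarith : (0:ℝ) ≤ t - s)
    rw [hDdef]; linarith
  have hεD : (0:ℝ) < ε / D := div_pos hε hD
  refine ⟨(ε / D) ^ (θ - 1)⁻¹, Real.rpow_pos_of_pos hεD _, ?_⟩
  intro N π hpart hmesh
  obtain ⟨hπ0, hπN, hπlt⟩ := hpart
  have hmono : ∀ j, j ≤ N → ∀ i, i ≤ j → π i ≤ π j := by
    intro j
    induction j with
    | zero => intro _ i hi; rw [Nat.le_zero.mp hi]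
    | succ j IH =>
      intro hjN i hij
      rcases Nat.eq_or_lt_of_le hij with h | h
      · rw [h]
      · exact (IH (by omega) i (by omega)).trans (hπlt j (by omega)).le
  have hδθ : (((ε / D) ^ (θ - 1)⁻¹) : ℝ) ^ (θ - 1) = ε / D := by
    rw [← Real.rpow_mul hεD.le, inv_mul_cancel₀ (by linarith : θ - 1 ≠ 0), Real.rpow_one]
  have hstep : ∀ i ∈ Finset.range N,
      ‖∫ w in simplexSet m' (π i) (π (i + 1)),
          (k τ (w (Fin.last m')) * ∏ j : Fin m', k (w j.succ) (w j.castSucc)) •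
            (B (volterraIter ιn k x s (π i) (w 0) -
                volterraIter ιn k x s (π i) (π i)))
              (fun l => deriv x (w l))‖ ≤
        K0 * (ε / D) * (π (i + 1) - π i) := by
    intro i hi
    rw [Finset.mem_range] at hi
    have hd : 0 < π (i + 1) - π i := by linarith [hπlt i hi]
    have hsi : s ≤ π i := by rw [← hπ0]; exact hmono i (by omega) 0 (by omega)
    have hit : π (i + 1) ≤ t := by rw [← hπN]; exact hmono N (by omega) (i + 1) (by omega)
    refine le_trans (hterm (π i) (π (i + 1)) hsi (by linarith) hit) ?_
    have hdθ : (π (i + 1) - π i) ^ θ ≤ (ε / D) * (π (i + 1) - π i) := by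
      calc (π (i + 1) - π i) ^ θ
          = (π (i + 1) - π i) ^ (1:ℝ) * (π (i + 1) - π i) ^ (θ - 1) := by
            rw [← Real.rpow_add hd]; norm_num
        _ ≤ (π (i + 1) - π i) ^ (1:ℝ) * ((ε / D) ^ (θ - 1)⁻¹) ^ (θ - 1) := by
            apply mul_le_mul_of_nonneg_left
              (Real.rpow_le_rpow hd.le (hmesh i hi).le (by linarith))
              (Real.rpow_nonneg hd.le _)
        _ = (ε / D) * (π (i + 1) - π i) := by
            rw [hδθ, Real.rpow_one]; ring
    calc K0 * (π (i + 1) - π i) ^ θ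
        ≤ K0 * ((ε / D) * (π (i + 1) - π i)) := mul_le_mul_of_nonneg_left hdθ hK0nn
      _ = K0 * (ε / D) * (π (i + 1) - π i) := by ring
  calc ∑ i ∈ Finset.range N,
        ‖∫ w in simplexSet m' (π i) (π (i + 1)),
            (k τ (w (Fin.last m')) * ∏ j : Fin m', k (w j.succ) (w j.castSucc)) •
              (B (volterraIter ιn k x s (π i) (w 0) -
                  volterraIter ιn k x s (π i) (π i)))
                (fun l => deriv x (w l))‖
      ≤ ∑ i ∈ Finset.range N, K0 * (ε / D) * (π (i + 1) - π i) :=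
        Finset.sum_le_sum hstep
    _ = K0 * (ε / D) * (t - s) := by
        rw [← Finset.mul_sum, Finset.sum_range_sub π, hπN, hπ0]
    _ = K0 * (t - s) * (ε / D) := by ring
    _ < D * (ε / D) := by
        apply mul_lt_mul_of_pos_right _ hεD
        rw [hDdef]; linarith
    _ = ε := by field_simp
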